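/- There exist a finite linearly ordered set V, a finite 2-dimensional abstract simplicial complex K on V, and a 1-cycle c of K with real coefficients whose homology class is nonzero, such that the minimum cardinality of a homological edge cut for c equals 3, while the homological maximum flow sup { r ∈ ℝ : there exists B ∈ C_2(K;ℝ) with |(∂_2 B + r·c)(e)| ≤ 1 for every edge e ∈ K^(1) } equals 3/2. In particular, a max-flow/min-cut theorem fails for homological edge cuts, and the natural linear programming relaxation of the minimum homological cut problem is not tight. -/

import Mathlib

open Finset

variable {V : Type*} [Fintype V] [LinearOrder V]

/-- `K` is a finite abstract simplicial complex on `V`: a collection of nonempty finite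
subsets of `V` closed under passing to nonempty subsets. -/
def IsComplex (K : Finset (Finset V)) : Prop :=
  (∀ σ ∈ K, σ.Nonempty) ∧ ∀ σ ∈ K, ∀ τ ⊆ σ, τ.Nonempty → τ ∈ K

/-- The set `K^(p)` of `p`-simplices of `K` (members of cardinality `p+1`). -/
def pSimplices (K : Finset (Finset V)) (p : ℕ) : Finset (Finset V) :=
  K.filter fun σ => σ.card = p + 1

/-- The indicator `p`-chain of a `p`-simplex `σ`. -/
def ind (F : Type*) [Zero F] [One F] (σ : Finset V) : Finset V → F :=
  fun τ => if τ = σ then 1 else 0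

/-- The simplicial boundary operator on chains (with respect to the linear order on `V`):
the indicator of a simplex `{v_0 < … < v_p}` is sent to
`Σ_{i} (−1)^i · indicator of {v_0,…,v_p} \ {v_i}`.  Equivalently, the coefficient of a
chain's boundary at a face `σ` is `Σ_{v ∉ σ} (−1)^{#{u ∈ σ : u < v}} · c (σ ∪ {v})`. -/
def bdry {F : Type*} [CommRing F] (c : Finset V → F) : Finset V → F :=
  fun σ => ∑ v ∈ σᶜ, (-1 : F) ^ (σ.filter fun u => u < v).card * c (insert v σ)

/-- Evaluation of a cochain `φ` on a chain `c`, extended bilinearly. -/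
def evalC {F : Type*} [CommRing F] (φ c : Finset V → F) : F :=
  ∑ σ : Finset V, φ σ * c σ

/-- `c` is a `p`-chain of `K`: it is supported on the `p`-simplices of `K`. -/
def suppIn {F : Type*} [Zero F] (K : Finset (Finset V)) (p : ℕ) (c : Finset V → F) : Prop :=
  ∀ σ : Finset V, c σ ≠ 0 → σ ∈ K ∧ σ.card = p + 1

/-- `c` is a `p`-cycle of `K`. -/
def IsCycleOf {F : Type*} [CommRing F] (K : Finset (Finset V)) (p : ℕ)
    (c : Finset V → F) : Prop :=
  suppIn K p c ∧ bdry c = 0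

/-- Two `p`-chains are homologous in `K` if their difference is the boundary of a
`(p+1)`-chain of `K`. -/
def HomologousIn {F : Type*} [CommRing F] (K : Finset (Finset V)) (p : ℕ)
    (c₁ c₂ : Finset V → F) : Prop :=
  ∃ b : Finset V → F, suppIn K (p + 1) b ∧ c₁ - c₂ = bdry b

/-- `K − C`: the subcomplex of all simplices of `K` having no subset belonging to `C`. -/
def deleteSimps (K C : Finset (Finset V)) : Finset (Finset V) :=
  K.filter fun σ => ∀ τ ∈ C, ¬ τ ⊆ σ

/-- `C` is a homological cut for the 1-cycle `c`: no 1-cycle of `K − C` is homologous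
to `c` in `K`. -/
def IsHomCut {F : Type*} [CommRing F] (K C : Finset (Finset V)) (c : Finset V → F) : Prop :=
  ¬ ∃ z : Finset V → F, IsCycleOf (deleteSimps K C) 1 z ∧ HomologousIn K 1 z c

/-- The content of Example 6.3: a finite 2-dimensional simplicial complex `K` on `V` and a
1-cycle `c` over `ℝ` with nonzero homology class such that the minimum cardinality of a
homological edge cut for `c` is `3`, while the homological maximum flow
`sup { r | ∃ B ∈ C_2(K;ℝ), |(∂_2 B + r·c)(e)| ≤ 1 for all e ∈ K^(1) }` is `3/2`. -/
def Stmt11Prop (V : Type) [Fintype V] [LinearOrder V] : Prop :=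
  ∃ (K : Finset (Finset V)) (c : Finset V → ℝ),
    IsComplex K ∧ (∀ σ ∈ K, σ.card ≤ 3) ∧ (∃ σ ∈ K, σ.card = 3) ∧
    IsCycleOf K 1 c ∧ (¬ ∃ b : Finset V → ℝ, suppIn K 2 b ∧ bdry b = c) ∧
    sInf { n : ℕ | ∃ C : Finset (Finset V),
      C ⊆ pSimplices K 1 ∧ IsHomCut K C c ∧ C.card = n } = 3 ∧
    sSup { r : ℝ | ∃ B : Finset V → ℝ, suppIn K 2 B ∧
      ∀ e ∈ pSimplices K 1, |(bdry B + r • c) e| ≤ 1 } = 3 / 2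

/-!
The complex is the 5-vertex Möbius band and `c` is its boundary circle, which is twice the core
circle in homology. The cocycle `y = 01 + 02 - 14` satisfies `⟨y, c⟩ = 2`, and pairing with a
cocycle is constant on homology classes. Hence every cycle homologous to `c` meets the support
of `y` (a cut of size 3), `c` is not a boundary, and every flow value `r` satisfies
`2r = ⟨y, ∂B + r c⟩ ≤ ‖y‖₁ = 3`. Conversely, three cycles homologous to `c` with disjoint
supports force every cut to have at least 3 edges, and half the sum of all triangles carries
the flow `3/2`.
-/

theorem suppIn.map {V R S : Type*} [CommRing R] [CommRing S] (f : R →+* S)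
    {K : Finset (Finset V)} {p : ℕ} {c : Finset V → R} (hc : suppIn K p c) :
    suppIn K p (f ∘ c) :=
  fun σ hσ => hc σ fun h => hσ (by simp [h])

section Pairing

variable {V F : Type*} [Fintype V] [CommRing F]

theorem evalC_add (φ c c' : Finset V → F) : evalC φ (c + c') = evalC φ c + evalC φ c' :=
  dotProduct_add φ c c'

theorem evalC_sub (φ c c' : Finset V → F) : evalC φ (c - c') = evalC φ c - evalC φ c' :=
  dotProduct_sub φ c c'

theorem evalC_smul (φ c : Finset V → F) (r : F) : evalC φ (r • c) = r * evalC φ c :=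
  dotProduct_smul r φ c

theorem evalC_map {S : Type*} [CommRing S] (f : F →+* S) (φ c : Finset V → F) :
    evalC (f ∘ φ) (f ∘ c) = f (evalC φ c) := by
  simp [evalC, map_sum]

end Pairing

section Coboundary

variable {V F : Type*} [LinearOrder V] [CommRing F]

/-- The transpose of `bdry` with respect to the pairing `evalC`. -/
def cobdry (φ : Finset V → F) : Finset V → F :=
  fun τ => ∑ v ∈ τ, (-1 : F) ^ ((τ.erase v).filter fun u => u < v).card * φ (τ.erase v)

def IsCocycleOf (K : Finset (Finset V)) (p : ℕ) (φ : Finset V → F) : Prop :=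
  ∀ τ ∈ K, τ.card = p + 2 → cobdry φ τ = 0

theorem cobdry_map {S : Type*} [CommRing S] (f : F →+* S) (φ : Finset V → F) :
    cobdry (f ∘ φ) = f ∘ cobdry φ := by
  funext τ
  simp [cobdry, map_sum]

theorem IsCocycleOf.map {S : Type*} [CommRing S] (f : F →+* S) {K : Finset (Finset V)}
    {p : ℕ} {φ : Finset V → F} (hφ : IsCocycleOf K p φ) : IsCocycleOf K p (f ∘ φ) :=
  fun τ hτK hτcard => by rw [cobdry_map, Function.comp_apply, hφ τ hτK hτcard, map_zero]

end Coboundary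

section Boundary

variable {V F : Type*} [Fintype V] [LinearOrder V] [CommRing F]

theorem bdry_smul (k : F) (c : Finset V → F) : bdry (k • c) = k • bdry c := by
  funext σ
  simp only [bdry, Pi.smul_apply, smul_eq_mul, mul_sum]
  exact sum_congr rfl fun v _ => by ring

theorem evalC_bdry (φ b : Finset V → F) : evalC φ (bdry b) = evalC (cobdry φ) b := by
  simp only [evalC, bdry, cobdry, mul_sum, sum_mul]
  rw [sum_comm' (t' := univ) (s' := fun v : V => univ.filter fun σ : Finset V => v ∉ σ)
      (by simp),
    sum_comm' (t' := univ) (s' := fun v : V => univ.filter fun τ : Finset V => v ∈ τ) (by simp)]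
  refine sum_congr rfl fun v _ => sum_nbij' (insert v) (erase · v) ?_ ?_ ?_ ?_ ?_
  all_goals intro σ hσ
  all_goals simp only [mem_filter, mem_univ, true_and] at hσ ⊢
  · exact mem_insert_self v σ
  · exact notMem_erase v σ
  · exact erase_insert hσ
  · exact insert_erase hσ
  · rw [erase_insert hσ]; ring

variable {S : Type*} [CommRing S] (f : F →+* S) {K : Finset (Finset V)} {p : ℕ}

theorem bdry_map (c : Finset V → F) : bdry (f ∘ c) = f ∘ bdry c := by
  funext σ
  simp [bdry, map_sum]

theorem IsCycleOf.map {c : Finset V → F} (hc : IsCycleOf K p c) : IsCycleOf K p (f ∘ c) :=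
  ⟨hc.1.map f, by rw [bdry_map, hc.2]; ext; simp⟩

theorem HomologousIn.map {c c' : Finset V → F} (h : HomologousIn K p c c') :
    HomologousIn K p (f ∘ c) (f ∘ c') := by
  obtain ⟨b, hb, hcc'⟩ := h
  refine ⟨f ∘ b, hb.map f, ?_⟩
  rw [bdry_map, ← hcc']
  ext; simp

end Boundary

section Cochains

variable {V F : Type*} [Fintype V] [LinearOrder V] [CommRing F]
  {K : Finset (Finset V)} {p : ℕ} {φ : Finset V → F}

theorem IsCocycleOf.evalC_bdry_eq_zero (hφ : IsCocycleOf K p φ) {b : Finset V → F}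
    (hb : suppIn K (p + 1) b) : evalC φ (bdry b) = 0 := by
  rw [evalC_bdry]
  refine sum_eq_zero fun τ _ => ?_
  by_cases hbτ : b τ = 0
  · rw [hbτ, mul_zero]
  · obtain ⟨hτK, hτcard⟩ := hb τ hbτ
    rw [hφ τ hτK hτcard, zero_mul]

theorem IsCocycleOf.evalC_eq_of_homologousIn (hφ : IsCocycleOf K p φ) {z c : Finset V → F}
    (h : HomologousIn K p z c) : evalC φ z = evalC φ c := by
  obtain ⟨b, hb, hzc⟩ := h
  rw [← sub_eq_zero, ← evalC_sub, hzc, hφ.evalC_bdry_eq_zero hb]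

theorem evalC_eq_zero_of_suppIn_deleteSimps {C : Finset (Finset V)}
    (hφ : ∀ σ, φ σ ≠ 0 → σ ∈ C) {z : Finset V → F}
    (hz : suppIn (deleteSimps K C) p z) : evalC φ z = 0 := by
  refine sum_eq_zero fun σ _ => ?_
  by_cases hσz : z σ = 0
  · rw [hσz, mul_zero]
  · have hσC : σ ∉ C := fun hσC => (mem_filter.mp (hz σ hσz).1).2 σ hσC subset_rfl
    rw [not_imp_comm.mp (hφ σ) hσC, zero_mul]

theorem isHomCut_of_isCocycleOf {C : Finset (Finset V)} (hφ : IsCocycleOf K 1 φ)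
    (hφC : ∀ σ, φ σ ≠ 0 → σ ∈ C) {c : Finset V → F} (hc : evalC φ c ≠ 0) :
    IsHomCut K C c := by
  rintro ⟨z, ⟨hz, -⟩, hzc⟩
  exact hc (hφ.evalC_eq_of_homologousIn hzc ▸ evalC_eq_zero_of_suppIn_deleteSimps hφC hz)

theorem IsCocycleOf.not_exists_bdry_eq (hφ : IsCocycleOf K p φ) {c : Finset V → F}
    (hc : evalC φ c ≠ 0) : ¬ ∃ b, suppIn K (p + 1) b ∧ bdry b = c := by
  rintro ⟨b, hb, rfl⟩
  exact hc (hφ.evalC_bdry_eq_zero hb)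

end Cochains

section Cuts

variable {V F : Type*} [Fintype V] [LinearOrder V] [CommRing F] {K C : Finset (Finset V)}
  {c : Finset V → F}

theorem exists_mem_cut_of_homologousIn (hC : C ⊆ pSimplices K 1) (hcut : IsHomCut K C c)
    {z : Finset V → F} (hz : IsCycleOf K 1 z) (hzc : HomologousIn K 1 z c) :
    ∃ σ ∈ C, z σ ≠ 0 := by
  by_contra! hzC
  refine hcut ⟨z, ⟨fun σ hσ => ?_, hz.2⟩, hzc⟩
  obtain ⟨hσK, hσcard⟩ := hz.1 σ hσ
  refine ⟨mem_filter.mpr ⟨hσK, fun τ hτC hτσ => hσ (hzC σ ?_)⟩, hσcard⟩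
  have hτcard : τ.card = 2 := (mem_filter.mp (hC hτC)).2
  rwa [← eq_of_subset_of_card_le hτσ (by omega)]

theorem card_le_of_isHomCut {n : ℕ} (z : Fin n → Finset V → F)
    (hz : ∀ i, IsCycleOf K 1 (z i) ∧ HomologousIn K 1 (z i) c)
    (hdisj : ∀ i j σ, z i σ ≠ 0 → z j σ ≠ 0 → i = j)
    (hC : C ⊆ pSimplices K 1) (hcut : IsHomCut K C c) : n ≤ C.card := by
  choose σ hσC hσz using fun i => exists_mem_cut_of_homologousIn hC hcut (hz i).1 (hz i).2
  simpa using card_le_card_of_injOn (s := univ) σ (fun i _ => hσC i)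
    (fun i _ j _ hij => hdisj i j (σ i) (hσz i) (hij ▸ hσz j))

end Cuts

section Flows

variable {V : Type*} [Fintype V] [LinearOrder V] {K : Finset (Finset V)}

/-- Weak LP duality for the homological maximum flow. -/
theorem mul_evalC_le_of_isCocycleOf {φ c B : Finset V → ℝ} {r : ℝ} (hφ : IsCocycleOf K 1 φ)
    (hφK : suppIn K 1 φ) (hB : suppIn K 2 B)
    (hflow : ∀ e ∈ pSimplices K 1, |(bdry B + r • c) e| ≤ 1) :
    r * evalC φ c ≤ ∑ σ, |φ σ| := by
  have hpair : evalC φ (bdry B + r • c) = r * evalC φ c := by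
    rw [evalC_add, evalC_smul, hφ.evalC_bdry_eq_zero hB, zero_add]
  rw [← hpair]
  refine (abs_sum_le_sum_abs _ _).trans' (le_abs_self _) |>.trans (sum_le_sum fun σ _ => ?_)
  rw [abs_mul]
  by_cases hσ : φ σ = 0
  · simp [hσ]
  · obtain ⟨hσK, hσcard⟩ := hφK σ hσ
    exact mul_le_of_le_one_right (abs_nonneg _) (hflow σ (mem_filter.mpr ⟨hσK, hσcard⟩))

end Flows

/-- The triangles `{i, i+1, i+2}` mod 5. -/
def mobiusTriangles : Finset (Finset (Fin 5)) :=
  {{0, 1, 2}, {1, 2, 3}, {2, 3, 4}, {0, 3, 4}, {0, 1, 4}}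

def mobius : Finset (Finset (Fin 5)) :=
  univ.filter fun σ => σ.Nonempty ∧ ∃ t ∈ mobiusTriangles, σ ⊆ t

/-- The boundary circle `0 → 2 → 4 → 1 → 3 → 0` of the Möbius band. -/
def mobiusBoundary : Finset (Fin 5) → ℤ := fun σ =>
  if σ = {0, 2} ∨ σ = {2, 4} ∨ σ = {1, 3} then 1
  else if σ = {1, 4} ∨ σ = {0, 3} then -1 else 0

def mobiusCut : Finset (Finset (Fin 5)) := {{0, 1}, {0, 2}, {1, 4}}

def mobiusCocycle : Finset (Fin 5) → ℤ := fun σ =>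
  if σ = {0, 1} ∨ σ = {0, 2} then 1 else if σ = {1, 4} then -1 else 0

def signedTriangles (N : Finset (Finset (Fin 5))) : Finset (Fin 5) → ℤ := fun σ =>
  if σ ∈ mobiusTriangles then (if σ ∈ N then -1 else 1) else 0

/-- Three cycles homologous to the boundary circle; their supports `{02, 04, 24}`,
`{01, 03, 13}` and `{12, 14, 23, 34}` partition the edges. -/
def mobiusPacking (i : Fin 3) : Finset (Fin 5) → ℤ :=
  mobiusBoundary + bdry (signedTriangles (![{{0, 1, 2}, {2, 3, 4}}, {{1, 2, 3}, {0, 3, 4}},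
    {{0, 1, 4}}] i))

theorem mobius_isComplex : IsComplex mobius := by
  unfold IsComplex; decide

theorem card_le_three_of_mem_mobius : ∀ σ ∈ mobius, σ.card ≤ 3 := by decide

theorem mem_mobius_of_mem_mobiusTriangles :
    ∀ σ ∈ mobiusTriangles, σ ∈ mobius ∧ σ.card = 3 := by decide

theorem mobiusBoundary_isCycleOf : IsCycleOf mobius 1 mobiusBoundary :=
  ⟨by unfold suppIn; decide, funext (by decide)⟩

theorem mobiusCocycle_isCocycleOf : IsCocycleOf mobius 1 mobiusCocycle := by
  unfold IsCocycleOf; decide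

theorem mobiusCocycle_suppIn : suppIn mobius 1 mobiusCocycle := by
  unfold suppIn; decide

theorem mem_mobiusCut_of_mobiusCocycle_ne_zero :
    ∀ σ, mobiusCocycle σ ≠ 0 → σ ∈ mobiusCut := by decide

theorem mobiusCut_subset : mobiusCut ⊆ pSimplices mobius 1 := by decide

theorem card_mobiusCut : mobiusCut.card = 3 := by decide

theorem evalC_mobiusCocycle_mobiusBoundary : evalC mobiusCocycle mobiusBoundary = 2 := by
  decide

theorem sum_abs_mobiusCocycle : ∑ σ, |mobiusCocycle σ| = 3 := by decide

theorem signedTriangles_suppIn (N : Finset (Finset (Fin 5))) :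
    suppIn mobius 2 (signedTriangles N) := fun σ hσ =>
  mem_mobius_of_mem_mobiusTriangles σ (by by_contra h; simp [signedTriangles, h] at hσ)

theorem mobiusPacking_isCycleOf (i : Fin 3) : IsCycleOf mobius 1 (mobiusPacking i) := by
  revert i; unfold IsCycleOf suppIn; decide

theorem mobiusPacking_homologousIn (i : Fin 3) :
    HomologousIn mobius 1 (mobiusPacking i) mobiusBoundary :=
  ⟨_, signedTriangles_suppIn _, add_sub_cancel_left _ _⟩

theorem mobiusPacking_disjoint :
    ∀ i j σ, mobiusPacking i σ ≠ 0 → mobiusPacking j σ ≠ 0 → i = j := by decide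

theorem mobius_flow_bound :
    ∀ e ∈ pSimplices mobius 1, |bdry (signedTriangles ∅) e + 3 * mobiusBoundary e| ≤ 2 := by
  decide

theorem evalC_mobiusCocycle_mobiusBoundary_real :
    evalC (Int.castRingHom ℝ ∘ mobiusCocycle) (Int.castRingHom ℝ ∘ mobiusBoundary) = 2 := by
  rw [evalC_map, evalC_mobiusCocycle_mobiusBoundary, map_ofNat]

theorem mobius_isHomCut : IsHomCut mobius mobiusCut (Int.castRingHom ℝ ∘ mobiusBoundary) :=
  isHomCut_of_isCocycleOf (mobiusCocycle_isCocycleOf.map _)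
    (fun σ hσ => mem_mobiusCut_of_mobiusCocycle_ne_zero σ (by simpa using hσ))
    (by rw [evalC_mobiusCocycle_mobiusBoundary_real]; norm_num)

theorem three_le_card_of_isHomCut_mobius {C : Finset (Finset (Fin 5))}
    (hC : C ⊆ pSimplices mobius 1)
    (hcut : IsHomCut mobius C (Int.castRingHom ℝ ∘ mobiusBoundary)) : 3 ≤ C.card :=
  card_le_of_isHomCut (fun i => Int.castRingHom ℝ ∘ mobiusPacking i)
    (fun i => ⟨(mobiusPacking_isCycleOf i).map _, (mobiusPacking_homologousIn i).map _⟩)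
    (fun i j σ hi hj => mobiusPacking_disjoint i j σ (by simpa using hi) (by simpa using hj))
    hC hcut

theorem mobius_flow_feasible : ∃ B : Finset (Fin 5) → ℝ, suppIn mobius 2 B ∧
    ∀ e ∈ pSimplices mobius 1,
      |(bdry B + (3 / 2 : ℝ) • (Int.castRingHom ℝ ∘ mobiusBoundary)) e| ≤ 1 := by
  refine ⟨(1 / 2 : ℝ) • (Int.castRingHom ℝ ∘ signedTriangles ∅),
    fun σ hσ => signedTriangles_suppIn ∅ σ fun h => hσ (by simp [h]),
    fun e he => ?_⟩
  have hbound : |((bdry (signedTriangles ∅) e + 3 * mobiusBoundary e : ℤ) : ℝ)| ≤ 2 := by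
    exact_mod_cast mobius_flow_bound e he
  have hval : (bdry ((1 / 2 : ℝ) • (Int.castRingHom ℝ ∘ signedTriangles ∅))
        + (3 / 2 : ℝ) • (Int.castRingHom ℝ ∘ mobiusBoundary)) e
      = 1 / 2 * ((bdry (signedTriangles ∅) e + 3 * mobiusBoundary e : ℤ) : ℝ) := by
    rw [bdry_smul, bdry_map]
    push_cast
    simp only [Pi.add_apply, Pi.smul_apply, Function.comp_apply, eq_intCast, smul_eq_mul]
    ring
  rw [hval, abs_mul, abs_of_pos one_half_pos]
  linarith

theorem le_three_halves_of_mobius_flow {r : ℝ} {B : Finset (Fin 5) → ℝ}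
    (hB : suppIn mobius 2 B)
    (hflow : ∀ e ∈ pSimplices mobius 1,
      |(bdry B + r • (Int.castRingHom ℝ ∘ mobiusBoundary)) e| ≤ 1) :
    r ≤ 3 / 2 := by
  have h := mul_evalC_le_of_isCocycleOf (mobiusCocycle_isCocycleOf.map (Int.castRingHom ℝ))
    (mobiusCocycle_suppIn.map _) hB hflow
  have hsum : ∑ σ, |(Int.castRingHom ℝ ∘ mobiusCocycle) σ| = 3 := by
    simpa [← Int.cast_abs] using congrArg (Int.cast : ℤ → ℝ) sum_abs_mobiusCocycle
  rw [evalC_mobiusCocycle_mobiusBoundary_real, hsum] at h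
  linarith

/-- Example 6.3, EXMP:mincutmaxflow.
There exist a finite linearly ordered set `V`, a finite 2-dimensional abstract simplicial
complex `K` on `V`, and a 1-cycle `c` of `K` over `ℝ` with nonzero homology class, such that
the minimum cardinality of a homological edge cut for `c` is `3` while the homological
maximum flow for `c` is `3/2`.  In particular, max-flow/min-cut fails for homological edge
cuts and the LP relaxation of the minimum homological cut problem is not tight. -/
theorem stmt_11 :
    ∃ (V : Type) (iF : Fintype V) (iL : LinearOrder V), @Stmt11Prop V iF iL := by
  refine ⟨Fin 5, inferInstance, inferInstance, mobius, Int.castRingHom ℝ ∘ mobiusBoundary,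
    mobius_isComplex, card_le_three_of_mem_mobius,
    ⟨_, mem_mobius_of_mem_mobiusTriangles {0, 1, 2} (by decide)⟩,
    mobiusBoundary_isCycleOf.map _,
    (mobiusCocycle_isCocycleOf.map _).not_exists_bdry_eq
      (by rw [evalC_mobiusCocycle_mobiusBoundary_real]; norm_num), ?_, ?_⟩
  · refine IsLeast.csInf_eq
      ⟨⟨mobiusCut, mobiusCut_subset, mobius_isHomCut, card_mobiusCut⟩, ?_⟩
    rintro n ⟨C, hC, hcut, rfl⟩
    exact three_le_card_of_isHomCut_mobius hC hcut
  · refine IsGreatest.csSup_eq ⟨mobius_flow_feasible, ?_⟩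
    rintro r ⟨B, hB, hflow⟩
    exact le_three_halves_of_mobius_flow hB hflow
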